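/- Let M_1,…,M_t, K, K_1,…,K_t be mutually independent random variables taking values in finite sets, let M = (M_1,…,M_t), and let C be a random variable with I(M;C) = 0. Fix i ∈ {1,…,t} and a subset 𝐒_i ⊆ {1,…,t}∖{i}, and suppose H(M_i | C, (M_j)_{j∈𝐒_i}, K, K_i) = 0. Then H(K) + H(K_i) ≥ H(M_i). -/

import Mathlib

open scoped BigOperators

/-- The probability that the random variable `X` takes the value `a`, on a finite
probability space with mass function `μ`. -/
noncomputable def pr {Ω A : Type*} [Fintype Ω] (μ : Ω → ℝ) (X : Ω → A) (a : A) : ℝ :=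
  ∑ ω, Set.indicator {ω' | X ω' = a} μ ω

/-- Shannon entropy of a finitely valued random variable `X`. -/
noncomputable def entH {Ω A : Type*} [Fintype Ω] [Fintype A] (μ : Ω → ℝ) (X : Ω → A) : ℝ :=
  -∑ a, pr μ X a * Real.log (pr μ X a)

/-- Conditional Shannon entropy `H(X|Y)`. -/
noncomputable def condH {Ω A B : Type*} [Fintype Ω] [Fintype A] [Fintype B]
    (μ : Ω → ℝ) (X : Ω → A) (Y : Ω → B) : ℝ :=
  entH μ (fun ω => (X ω, Y ω)) - entH μ Y

/-- Mutual information `I(X;Y)`. -/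
noncomputable def mi {Ω A B : Type*} [Fintype Ω] [Fintype A] [Fintype B]
    (μ : Ω → ℝ) (X : Ω → A) (Y : Ω → B) : ℝ :=
  entH μ X + entH μ Y - entH μ (fun ω => (X ω, Y ω))

/-- Conditional mutual information `I(X;Y|Z)`. -/
noncomputable def cmi {Ω A B D : Type*} [Fintype Ω] [Fintype A] [Fintype B] [Fintype D]
    (μ : Ω → ℝ) (X : Ω → A) (Y : Ω → B) (Z : Ω → D) : ℝ :=
  condH μ X Z + condH μ Y Z - condH μ (fun ω => (X ω, Y ω)) Z

/-- Probability of the event `E` on a finite probability space with mass function `μ`. -/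
noncomputable def prEvent {Ω : Type*} [Fintype Ω] (μ : Ω → ℝ) (E : Ω → Prop) : ℝ :=
  ∑ ω, Set.indicator {ω' | E ω'} μ ω

/-!
With `M_S = (M_j)_{j ∈ S_i}`, split `H(M_i) = H(M_i | C, M_S) + I(M_i; C, M_S)`.

The information term vanishes. By the chain rule it is at most `I(M_i; M_S) + I((M_i, M_S); C)`;
the first summand is zero because `M_i` and `M_S` are functions of disjoint blocks of a family
with product law, and the second is at most `I(M; C) = 0` by data processing.

The conditional entropy is at most `H(M_i | K, K_i, C, M_S) + H(K, K_i | C, M_S)`, the first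
summand is zero by decodability, and the second is at most `H(K) + H(K_i)`.

Every Shannon inequality used comes from `I(X; Y | Z) ≥ 0`, which is `log r ≤ r - 1` for the
ratio `r = p(x,z) p(y,z) / (p(z) p(x,y,z))`, averaged over the sample space.
-/

open Finset Real

section Probability

variable {Ω α β : Type*} [Fintype Ω] {μ : Ω → ℝ}

theorem sum_pr_mul [Fintype α] (X : Ω → α) (f : α → ℝ) :
    ∑ a, pr μ X a * f a = ∑ ω, μ ω * f (X ω) := by
  classical
  simp only [pr, Set.indicator_apply, Set.mem_ofPred_eq, sum_mul, ite_mul, zero_mul]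
  rw [sum_comm]
  simp

theorem sum_pr [Fintype α] (hμ1 : ∑ ω, μ ω = 1) (X : Ω → α) : ∑ a, pr μ X a = 1 := by
  simpa [hμ1] using sum_pr_mul (μ := μ) X 1

theorem sum_pr_prod_left [Fintype α] (X : Ω → α) (Y : Ω → β) (b : β) :
    ∑ a, pr μ (fun ω => (X ω, Y ω)) (a, b) = pr μ Y b := by
  classical
  simp only [pr, Set.indicator_apply, Set.mem_ofPred_eq, Prod.ext_iff]
  rw [sum_comm]
  simp [ite_and]

theorem sum_pr_prod_right [Fintype β] (X : Ω → α) (Y : Ω → β) (a : α) :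
    ∑ b, pr μ (fun ω => (X ω, Y ω)) (a, b) = pr μ X a := by
  classical
  simp only [pr, Set.indicator_apply, Set.mem_ofPred_eq, Prod.ext_iff]
  rw [sum_comm]
  simp [ite_and]

theorem pr_nonneg (hμ0 : ∀ ω, 0 ≤ μ ω) (X : Ω → α) (a : α) : 0 ≤ pr μ X a :=
  sum_nonneg fun ω _ => Set.indicator_nonneg (fun ω' _ => hμ0 ω') ω

theorem le_pr_self (hμ0 : ∀ ω, 0 ≤ μ ω) (X : Ω → α) (ω : Ω) : μ ω ≤ pr μ X (X ω) := by
  have := single_le_sum (fun ω' _ => Set.indicator_nonneg (fun ω'' _ => hμ0 ω'') ω')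
    (mem_univ ω) (f := Set.indicator {ω' | X ω' = X ω} μ)
  rwa [Set.indicator_of_mem (by rfl)] at this

theorem pr_comp_of_injective {e : α → β} (he : Function.Injective e) (X : Ω → α) (a : α) :
    pr μ (fun ω => e (X ω)) (e a) = pr μ X a := by
  simp only [pr, he.eq_iff]

theorem pr_le_pr_comp (hμ0 : ∀ ω, 0 ≤ μ ω) (X : Ω → α) (f : α → β) (a : α) :
    pr μ X a ≤ pr μ (fun ω => f (X ω)) (f a) :=
  sum_le_sum fun ω _ => Set.indicator_le_indicator_of_subset
    (fun ω' (h : X ω' = a) => congrArg f h) hμ0 ω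

theorem sum_prod_pr {ι : Type*} [Fintype ι] [DecidableEq ι] {κ : ι → Type*}
    [∀ j, Fintype (κ j)] (hμ1 : ∑ ω, μ ω = 1) (X : ∀ j, Ω → κ j) :
    ∑ x : ∀ j, κ j, ∏ j, pr μ (X j) (x j) = 1 := by
  simp [← Fintype.prod_sum, sum_pr hμ1]

end Probability

section Entropy

variable {Ω α β γ : Type*} [Fintype Ω] [Fintype α] [Fintype β] [Fintype γ] {μ : Ω → ℝ}

theorem entH_eq_sum (X : Ω → α) : entH μ X = -∑ ω, μ ω * log (pr μ X (X ω)) := by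
  rw [entH, sum_pr_mul X (fun a => log (pr μ X a))]

theorem entH_eq_sum_negMulLog (X : Ω → α) : entH μ X = ∑ a, negMulLog (pr μ X a) := by
  simp [entH, negMulLog_eq_neg]

theorem entH_comp_of_injective {e : α → β} (he : Function.Injective e) (X : Ω → α) :
    entH μ (fun ω => e (X ω)) = entH μ X := by
  simp only [entH_eq_sum, pr_comp_of_injective he]

theorem entH_prod_comp_self (X : Ω → α) (f : α → β) :
    entH μ (fun ω => (X ω, f (X ω))) = entH μ X :=
  entH_comp_of_injective (e := fun a => (a, f a)) (fun _ _ h => congrArg Prod.fst h) X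

theorem entH_prod_comm (X : Ω → α) (Y : Ω → β) :
    entH μ (fun ω => (X ω, Y ω)) = entH μ (fun ω => (Y ω, X ω)) :=
  (entH_comp_of_injective Prod.swap_injective (fun ω => (X ω, Y ω))).symm

theorem entH_comp_le (hμ0 : ∀ ω, 0 ≤ μ ω) (X : Ω → α) (f : α → β) :
    entH μ (fun ω => f (X ω)) ≤ entH μ X := by
  simp only [entH_eq_sum, neg_le_neg_iff]
  refine sum_le_sum fun ω _ => ?_
  rcases (hμ0 ω).eq_or_lt with h | h
  · simp [← h]
  · exact mul_le_mul_of_nonneg_left (log_le_log (h.trans_le (le_pr_self hμ0 X ω))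
      (pr_le_pr_comp hμ0 X f (X ω))) h.le

theorem entH_const_unit (hμ1 : ∑ ω, μ ω = 1) : entH μ (fun _ => ()) = 0 := by
  have h : pr μ (fun _ : Ω => ()) () = 1 := by simpa using sum_pr hμ1 (fun _ : Ω => ())
  simp [entH, h]

theorem sum_pr_mul_pr_div_pr_le_one (hμ0 : ∀ ω, 0 ≤ μ ω) (hμ1 : ∑ ω, μ ω = 1)
    (X : Ω → α) (Y : Ω → β) (Z : Ω → γ) :
    ∑ w : (α × β) × γ, pr μ (fun ω => (X ω, Z ω)) (w.1.1, w.2) *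
      pr μ (fun ω => (Y ω, Z ω)) (w.1.2, w.2) / pr μ Z w.2 ≤ 1 :=
  calc _ = ∑ d, (∑ a, pr μ (fun ω => (X ω, Z ω)) (a, d)) *
        (∑ b, pr μ (fun ω => (Y ω, Z ω)) (b, d)) / pr μ Z d := by
        rw [Fintype.sum_prod_type_right]
        simp only [Fintype.sum_prod_type, sum_mul_sum, sum_div]
    _ = ∑ d, pr μ Z d * pr μ Z d / pr μ Z d := by simp only [sum_pr_prod_left]
    _ ≤ ∑ d, pr μ Z d := sum_le_sum fun d _ => by
        rw [mul_div_assoc]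
        exact mul_le_of_le_one_right (pr_nonneg hμ0 Z d) (div_self_le_one _)
    _ = 1 := sum_pr hμ1 Z

theorem cmi_nonneg (hμ0 : ∀ ω, 0 ≤ μ ω) (hμ1 : ∑ ω, μ ω = 1)
    (X : Ω → α) (Y : Ω → β) (Z : Ω → γ) : 0 ≤ cmi μ X Y Z := by
  set W := fun ω => ((X ω, Y ω), Z ω)
  set pXZ := pr μ (fun ω => (X ω, Z ω))
  set pYZ := pr μ (fun ω => (Y ω, Z ω))
  set pZ := pr μ Z
  set pW := pr μ W
  set r : (α × β) × γ → ℝ := fun w => pXZ (w.1.1, w.2) * pYZ (w.1.2, w.2) / (pZ w.2 * pW w)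
  set L : Ω → ℝ := fun ω =>
    log (pW (W ω)) + log (pZ (Z ω)) - log (pXZ (X ω, Z ω)) - log (pYZ (Y ω, Z ω))
  have hcmi : cmi μ X Y Z = ∑ ω, μ ω * L ω := by
    simp only [L, cmi, condH, entH_eq_sum, mul_add, mul_sub, sum_add_distrib, sum_sub_distrib]
    ring
  have hpoint : ∀ ω, μ ω * (1 - r (W ω)) ≤ μ ω * L ω := by
    intro ω
    rcases (hμ0 ω).eq_or_lt with h | h
    · simp [← h]
    have hXZ := h.trans_le (le_pr_self hμ0 (fun ω => (X ω, Z ω)) ω)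
    have hYZ := h.trans_le (le_pr_self hμ0 (fun ω => (Y ω, Z ω)) ω)
    have hZ := h.trans_le (le_pr_self hμ0 Z ω)
    have hW := h.trans_le (le_pr_self hμ0 W ω)
    refine mul_le_mul_of_nonneg_left ?_ h.le
    have := log_le_sub_one_of_pos (show 0 < r (W ω) by positivity)
    rw [log_div (by positivity) (by positivity), log_mul hXZ.ne' hYZ.ne',
      log_mul hZ.ne' hW.ne'] at this
    linarith
  have hr : ∑ ω, μ ω * r (W ω) ≤ 1 := by
    rw [← sum_pr_mul W r]
    refine le_trans (sum_le_sum fun w _ => ?_) (sum_pr_mul_pr_div_pr_le_one hμ0 hμ1 X Y Z)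
    change pW w * r w ≤ _
    rcases eq_or_ne (pW w) 0 with h | h
    · rw [h, zero_mul]
      exact div_nonneg (mul_nonneg (pr_nonneg hμ0 _ _) (pr_nonneg hμ0 _ _)) (pr_nonneg hμ0 _ _)
    · simp only [r]
      rw [← div_div, mul_div_cancel₀ _ h]
  calc 0 ≤ ∑ ω, μ ω * (1 - r (W ω)) := by
        simp only [mul_sub, mul_one, sum_sub_distrib, hμ1]
        linarith
    _ ≤ cmi μ X Y Z := hcmi ▸ sum_le_sum fun ω _ => hpoint ω

theorem mi_eq_cmi_unit (hμ1 : ∑ ω, μ ω = 1) (X : Ω → α) (Y : Ω → β) :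
    mi μ X Y = cmi μ X Y (fun _ => ()) := by
  simp only [mi, cmi, condH, entH_const_unit hμ1, entH_prod_comp_self X (fun _ => ()),
    entH_prod_comp_self Y (fun _ => ()), entH_prod_comp_self (fun ω => (X ω, Y ω)) (fun _ => ())]
  ring

theorem mi_nonneg (hμ0 : ∀ ω, 0 ≤ μ ω) (hμ1 : ∑ ω, μ ω = 1) (X : Ω → α) (Y : Ω → β) :
    0 ≤ mi μ X Y :=
  mi_eq_cmi_unit hμ1 X Y ▸ cmi_nonneg hμ0 hμ1 X Y _

theorem mi_comm (X : Ω → α) (Y : Ω → β) : mi μ X Y = mi μ Y X := by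
  rw [mi, mi, entH_prod_comm]
  ring

theorem entH_prod_le_add (hμ0 : ∀ ω, 0 ≤ μ ω) (hμ1 : ∑ ω, μ ω = 1) (X : Ω → α) (Y : Ω → β) :
    entH μ (fun ω => (X ω, Y ω)) ≤ entH μ X + entH μ Y := by
  have := mi_nonneg hμ0 hμ1 X Y
  rw [mi] at this
  linarith

theorem condH_le_entH (hμ0 : ∀ ω, 0 ≤ μ ω) (hμ1 : ∑ ω, μ ω = 1) (X : Ω → α) (Y : Ω → β) :
    condH μ X Y ≤ entH μ X := by
  have := mi_nonneg hμ0 hμ1 X Y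
  rw [mi] at this
  rw [condH]
  linarith

theorem entH_eq_condH_add_mi (X : Ω → α) (Y : Ω → β) : entH μ X = condH μ X Y + mi μ X Y := by
  rw [condH, mi]
  ring

theorem condH_comp_of_injective {e : β → γ} (he : Function.Injective e) (X : Ω → α)
    (Y : Ω → β) : condH μ X (fun ω => e (Y ω)) = condH μ X Y := by
  have hXY : entH μ (fun ω => (X ω, e (Y ω))) = entH μ (fun ω => (X ω, Y ω)) :=
    entH_comp_of_injective (e := fun p : α × β => (p.1, e p.2))
      (by rintro ⟨a, b⟩ ⟨a', b'⟩ h; simp_all [he.eq_iff])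
      (fun ω => (X ω, Y ω))
  rw [condH, condH, entH_comp_of_injective he, hXY]

theorem condH_le_condH_prod_add (hμ0 : ∀ ω, 0 ≤ μ ω) (X : Ω → α) (Y : Ω → β) (Z : Ω → γ) :
    condH μ X Z ≤ condH μ X (fun ω => (Y ω, Z ω)) + condH μ Y Z := by
  have := entH_comp_le hμ0 (fun ω => (X ω, (Y ω, Z ω))) (fun p => (p.1, p.2.2))
  simp only [condH]
  linarith

theorem condH_le_entH_of_condH_prod_eq_zero (hμ0 : ∀ ω, 0 ≤ μ ω) (hμ1 : ∑ ω, μ ω = 1)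
    (X : Ω → α) (Y : Ω → β) (Z : Ω → γ) (h : condH μ X (fun ω => (Y ω, Z ω)) = 0) :
    condH μ X Z ≤ entH μ Y := by
  linarith [condH_le_condH_prod_add hμ0 X Y Z, condH_le_entH hμ0 hμ1 Y Z]

theorem mi_comp_le (hμ0 : ∀ ω, 0 ≤ μ ω) (hμ1 : ∑ ω, μ ω = 1) (X : Ω → α) (Y : Ω → β)
    (f : α → γ) : mi μ (fun ω => f (X ω)) Y ≤ mi μ X Y := by
  have h := cmi_nonneg hμ0 hμ1 X Y (fun ω => f (X ω))
  rw [cmi, condH, condH, condH, entH_prod_comp_self X f, entH_prod_comm Y,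
    entH_prod_comp_self (fun ω => (X ω, Y ω)) (fun p => f p.1)] at h
  rw [mi, mi]
  linarith

theorem mi_prod_le_add (hμ0 : ∀ ω, 0 ≤ μ ω) (hμ1 : ∑ ω, μ ω = 1) (X : Ω → α) (Y : Ω → β)
    (Z : Ω → γ) :
    mi μ X (fun ω => (Z ω, Y ω)) ≤ mi μ X Y + mi μ (fun ω => (X ω, Y ω)) Z := by
  have hYZ := mi_nonneg hμ0 hμ1 Y Z
  have hXZY : entH μ (fun ω => (X ω, (Z ω, Y ω))) = entH μ (fun ω => ((X ω, Y ω), Z ω)) :=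
    entH_comp_of_injective (e := fun p : (α × β) × γ => (p.1.1, (p.2, p.1.2)))
      (by rintro ⟨⟨a, b⟩, c⟩ ⟨⟨a', b'⟩, c'⟩ h; simp_all) (fun ω => ((X ω, Y ω), Z ω))
  rw [mi] at hYZ
  rw [mi, mi, mi, hXZY, entH_prod_comm Z]
  linarith

end Entropy

section Independence

variable {Ω α β : Type*} [Fintype Ω] [Fintype β] {μ : Ω → ℝ}

theorem pr_eq_of_pr_prod_eq_mul {f : α → ℝ} {g : β → ℝ} (hg : ∑ b, g b = 1)
    (X : Ω → α) (Y : Ω → β) (h : ∀ a b, pr μ (fun ω => (X ω, Y ω)) (a, b) = f a * g b)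
    (a : α) : pr μ X a = f a := by
  rw [← sum_pr_prod_right X Y a]
  simp [h, ← mul_sum, hg]

variable [Fintype α]

theorem mi_eq_zero_of_pr_prod_eq_mul {f : α → ℝ} {g : β → ℝ} (hf : ∑ a, f a = 1)
    (hg : ∑ b, g b = 1) (X : Ω → α) (Y : Ω → β)
    (h : ∀ a b, pr μ (fun ω => (X ω, Y ω)) (a, b) = f a * g b) : mi μ X Y = 0 := by
  have hX : pr μ X = f := funext (pr_eq_of_pr_prod_eq_mul hg X Y h)
  have hY : pr μ Y = g := funext fun b => by
    rw [← sum_pr_prod_left X Y b]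
    simp [h, ← sum_mul, hf]
  rw [mi, entH_eq_sum_negMulLog, entH_eq_sum_negMulLog, entH_eq_sum_negMulLog,
    Fintype.sum_prod_type]
  simp only [h, hX, hY, negMulLog_mul, sum_add_distrib, ← sum_mul, ← mul_sum, hf, hg]
  ring

theorem mi_restrict_compl_eq_zero {ι : Type*} [Fintype ι] [DecidableEq ι] {κ : ι → Type*}
    [∀ j, Fintype (κ j)] (hμ1 : ∑ ω, μ ω = 1) (X : ∀ j, Ω → κ j)
    (hX : ∀ x, pr μ (fun ω j => X j ω) x = ∏ j, pr μ (X j) (x j))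
    (P : ι → Prop) [DecidablePred P] :
    mi μ (fun ω (j : {j // P j}) => X j ω) (fun ω (j : {j // ¬P j}) => X j ω) = 0 := by
  refine mi_eq_zero_of_pr_prod_eq_mul (sum_prod_pr hμ1 fun j : {j // P j} => X j)
    (sum_prod_pr hμ1 fun j : {j // ¬P j} => X j) _ _ fun u v => ?_
  set e := Equiv.piEquivPiSubtypeProd P κ
  calc pr μ (fun ω => ((fun j : {j // P j} => X j ω), (fun j : {j // ¬P j} => X j ω))) (u, v)
      = pr μ (fun ω => e (fun j => X j ω)) (e (e.symm (u, v))) := by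
        rw [e.apply_symm_apply]
        rfl
    _ = ∏ j, pr μ (X j) (e.symm (u, v) j) := by rw [pr_comp_of_injective e.injective, hX]
    _ = (∏ j : {j // P j}, pr μ (X j) (u j)) * ∏ j : {j // ¬P j}, pr μ (X j) (v j) := by
        rw [← Fintype.prod_subtype_mul_prod_subtype P]
        congr 1 <;> exact prod_congr rfl fun j _ => by simp [e, j.2]

end Independence

/-- If receiver `i` can decode `M_i` from `(C, (M_j)_{j ∈ S_i}, K, K_i)` in a perfectly
secure index code, then `H(K) + H(K_i) ≥ H(M_i)`. -/
theorem key_entropies_ge_message_entropy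
    {Ω : Type} [Fintype Ω] (μ : Ω → ℝ) (hμ0 : ∀ ω, 0 ≤ μ ω) (hμ1 : ∑ ω, μ ω = 1)
    (t : ℕ) (𝓜 : Fin t → Type) [∀ i, Fintype (𝓜 i)]
    (𝒦 : Type) [Fintype 𝒦] (𝒦p : Fin t → Type) [∀ i, Fintype (𝒦p i)]
    (𝒞 : Type) [Fintype 𝒞]
    (M : ∀ i, Ω → 𝓜 i) (K : Ω → 𝒦) (Kp : ∀ i, Ω → 𝒦p i) (C : Ω → 𝒞)
    (hind : ∀ (m : ∀ i, 𝓜 i) (k : 𝒦) (kp : ∀ i, 𝒦p i),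
      pr μ (fun ω => ((fun i => M i ω), K ω, (fun i => Kp i ω))) (m, k, kp)
        = (∏ i, pr μ (M i) (m i)) * pr μ K k * ∏ i, pr μ (Kp i) (kp i))
    (hsec : mi μ (fun ω i => M i ω) C = 0)
    (i : Fin t) (Si : Finset (Fin t)) (hSi : i ∉ Si)
    (hdec : condH μ (M i)
      (fun ω => (C ω, (fun j : {x // x ∈ Si} => M j.1 ω), K ω, Kp i ω)) = 0) :
    entH μ (M i) ≤ entH μ K + entH μ (Kp i) := by
  have hlaw : ∀ m, pr μ (fun ω j => M j ω) m = ∏ j, pr μ (M j) (m j) :=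
    pr_eq_of_pr_prod_eq_mul (g := fun y => pr μ K y.1 * ∏ j, pr μ (Kp j) (y.2 j))
      (by simp [Fintype.sum_prod_type, ← mul_sum, sum_prod_pr hμ1, sum_pr hμ1])
      _ (fun ω => (K ω, fun j => Kp j ω)) fun m y => (hind m y.1 y.2).trans (mul_assoc _ _ _)
  set MS : Ω → ∀ j : {x // x ∈ Si}, 𝓜 j.1 := fun ω j => M j.1 ω
  have hside : mi μ (M i) MS ≤ 0 :=
    calc _ ≤ mi μ (fun ω (j : {x // x ∉ Si}) => M j.1 ω) MS :=
          mi_comp_le hμ0 hμ1 _ _ fun r => r ⟨i, hSi⟩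
      _ = 0 := by
        rw [mi_comm]
        -- `convert` reconciles the `Finset` and `Subtype` instances of `Fintype Si`
        convert mi_restrict_compl_eq_zero hμ1 M hlaw (· ∈ Si)
  have hcode : mi μ (fun ω => (M i ω, MS ω)) C ≤ 0 :=
    (mi_comp_le hμ0 hμ1 (fun ω j => M j ω) C
      fun m => (m i, fun j : {x // x ∈ Si} => m j.1)).trans hsec.le
  have hinfo : mi μ (M i) (fun ω => (C ω, MS ω)) ≤ 0 := by
    linarith [mi_prod_le_add hμ0 hμ1 (M i) MS C]
  have hkeys : condH μ (M i) (fun ω => (C ω, MS ω)) ≤ entH μ K + entH μ (Kp i) := by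
    refine (condH_le_entH_of_condH_prod_eq_zero hμ0 hμ1 (M i) (fun ω => (K ω, Kp i ω)) _
      ?_).trans (entH_prod_le_add hμ0 hμ1 K (Kp i))
    refine (condH_comp_of_injective (e := fun v : 𝒞 × (∀ j : {x // x ∈ Si}, 𝓜 j.1) × 𝒦 × 𝒦p i =>
      ((v.2.2.1, v.2.2.2), (v.1, v.2.1))) ?_ (M i) (fun ω => (C ω, MS ω, K ω, Kp i ω))).trans hdec
    rintro ⟨c, s, k, kp⟩ ⟨c', s', k', kp'⟩ h
    simp_all
  linarith [entH_eq_condH_add_mi (μ := μ) (M i) (fun ω => (C ω, MS ω))]
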